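/- For n ≥ 3 let A_n be the graph given by the disjoint union of all cycles C_m with m ≥ 3 and m ≠ n. The family K = {A_n : n ≥ 3} is co-learnable but not Id-learnable: some learner co-learns K, but there is no map Γ from structures to Baire space ℕ → ℕ, continuous on LD(K), with R ≅ R' iff Γ R = Γ R' for all R, R' ∈ LD(K). -/
import Mathlib


/-- A structure on domain ℕ: a binary relation given as a map to `Bool`. -/
abbrev Struc := ℕ → ℕ → Bool

/-- The restrictions of `R` and `R'` to `{0,…,s} × {0,…,s}` agree. -/
def restrEq (R R' : Struc) (s : ℕ) : Prop :=
  ∀ x ≤ s, ∀ y ≤ s, R x y = R' x y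

/-- `R` and `R'` are isomorphic structures. -/
def Isom (R R' : Struc) : Prop :=
  ∃ e : ℕ ≃ ℕ, ∀ x y, R' (e x) (e y) = R x y

/-- `R↾s` embeds into `R'`: there is a map injective on `{0,…,s}` preserving the relation. -/
def EmbedsRestr (R : Struc) (s : ℕ) (R' : Struc) : Prop :=
  ∃ h : ℕ → ℕ, (∀ x ≤ s, ∀ y ≤ s, h x = h y → x = y) ∧
    (∀ x ≤ s, ∀ y ≤ s, R' (h x) (h y) = R x y)

/-- The learning domain of a family: all isomorphic copies of members of the family. -/
def LD {I : Type} (A : I → Struc) : Set Struc := {R | ∃ i, Isom R (A i)}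

/-- A learner: its conjecture at stage `s` depends only on `R↾s`. -/
def IsLearner {I : Type} (M : Struc → ℕ → Option I) : Prop :=
  ∀ R R' s, restrEq R R' s → M R s = M R' s

/-- `M` Ex-learns the family `A`. -/
def ExLearns {I : Type} (A : I → Struc) (M : Struc → ℕ → Option I) : Prop :=
  ∀ R i, Isom R (A i) → ∃ s₀, ∀ s ≥ s₀, M R s = some i

/-- `M` Fin-learns the family `A`. -/
def FinLearns {I : Type} (A : I → Struc) (M : Struc → ℕ → Option I) : Prop :=
  ∀ R i, Isom R (A i) →
    ∃ s₀, (∀ s < s₀, M R s = none) ∧ (∀ s ≥ s₀, M R s = some i)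

/-- `M` co-learns the family `A`. -/
def CoLearns {I : Type} (A : I → Struc) (M : Struc → ℕ → Option I) : Prop :=
  ∀ R i, Isom R (A i) → ∀ j, (∃ s, M R s = some j) ↔ j ≠ i

/-- `M` nUs-learns the family `A`: it Ex-learns it and never abandons the correct conjecture. -/
def NUsLearns {I : Type} (A : I → Struc) (M : Struc → ℕ → Option I) : Prop :=
  ExLearns A M ∧
    ∀ R i, Isom R (A i) → ∀ s, M R s = some i → ∀ t ≥ s, M R t = some i

/-- `M` Dec-learns the family `A`: it Ex-learns it and never repeats an abandoned conjecture. -/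
def DecLearns {I : Type} (A : I → Struc) (M : Struc → ℕ → Option I) : Prop :=
  ExLearns A M ∧
    ∀ R ∈ LD A, ∀ (j : I) (s : ℕ), M R s = some j → M R (s + 1) ≠ some j →
      ∀ t > s, M R t ≠ some j

/-- `M` PL-learns the family `A`: the unique conjecture output infinitely often is correct. -/
def PLLearns {I : Type} (A : I → Struc) (M : Struc → ℕ → Option I) : Prop :=
  ∀ R ∈ LD A, ∀ i, {s | M R s = some i}.Infinite ↔ Isom R (A i)

/-- The relation `E₀` on Baire space: eventual agreement. -/
def E0 (p q : ℕ → ℕ) : Prop := ∃ m, ∀ n ≥ m, p n = q n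

/-- The relation `E₃` on `ℕ → (ℕ → ℕ)`: columnwise `E₀`. -/
def E3 (p q : ℕ → ℕ → ℕ) : Prop := ∀ m, E0 (p m) (q m)

/-- The relation `E_range` on Baire space: equality of ranges. -/
def Erange (p q : ℕ → ℕ) : Prop := Set.range p = Set.range q

/-- `cycLen n k` enumerates, in increasing order, the lengths `m ≥ 3`, `m ≠ n`
of the cycles occurring in the graph `A_n` (for `n ≥ 3`). -/
def cycLen (n k : ℕ) : ℕ := if k + 3 < n then k + 3 else k + 4

/-- `R` is (a copy of) the disjoint union of all cycles `C_m` with `m ≥ 3`, `m ≠ n`. -/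
def IsCyclesUnion (n : ℕ) (R : Struc) : Prop :=
  ∃ e : (Σ k : ℕ, Fin (cycLen n k)) ≃ ℕ,
    ∀ v w : (Σ k : ℕ, Fin (cycLen n k)),
      R (e v) (e w) = true ↔
        v.1 = w.1 ∧ (w.2.val = (v.2.val + 1) % cycLen n v.1 ∨
                     v.2.val = (w.2.val + 1) % cycLen n w.1)

lemma isom_refl (R : Struc) : Isom R R := ⟨Equiv.refl ℕ, fun _ _ => rfl⟩

lemma isom_symm {R R' : Struc} (h : Isom R R') : Isom R' R := by
  obtain ⟨e, he⟩ := h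
  exact ⟨e.symm, fun x y => by
    conv_rhs => rw [← e.apply_symm_apply x, ← e.apply_symm_apply y]
    rw [he]⟩

lemma isom_trans {R R' R'' : Struc} (h : Isom R R') (h' : Isom R' R'') : Isom R R'' := by
  obtain ⟨e, he⟩ := h; obtain ⟨e', he'⟩ := h'
  exact ⟨e.trans e', fun x y => by simp [Equiv.trans_apply, he', he]⟩

lemma cycLen_ge (n k : ℕ) : 3 ≤ cycLen n k := by unfold cycLen; split <;> omega

lemma cycLen_ne (n k : ℕ) : cycLen n k ≠ n := by unfold cycLen; split <;> omega

lemma cycLen_surj {n L : ℕ} (hn : 3 ≤ n) (hL : 3 ≤ L) (hne : L ≠ n) :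
    ∃ k, cycLen n k = L := by
  rcases lt_or_gt_of_ne hne with h | h
  · exact ⟨L - 3, by unfold cycLen; split <;> omega⟩
  · exact ⟨L - 4, by unfold cycLen; split <;> omega⟩

/-- a cycle of length `L` embeds in `R` -/
def HasCycle (L : ℕ) (R : Struc) : Prop :=
  3 ≤ L ∧ ∃ v : ℕ → ℕ, (∀ a < L, ∀ b < L, v a = v b → a = b) ∧
    ∀ a < L, R (v a) (v ((a + 1) % L)) = true

lemma hasCycle_of_isom {L} {R R' : Struc} (h : Isom R R') (hc : HasCycle L R) :
    HasCycle L R' := by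
  obtain ⟨e, he⟩ := h
  obtain ⟨hL, v, hinj, hadj⟩ := hc
  exact ⟨hL, e ∘ v, fun a ha b hb hab => hinj a ha b hb (e.injective hab),
    fun a ha => by simpa [he] using hadj a ha⟩


lemma hasCycle_iff {n : ℕ} (hn : 3 ≤ n) {R : Struc} (h : IsCyclesUnion n R) (L : ℕ) :
    HasCycle L R ↔ (3 ≤ L ∧ L ≠ n) := by
  obtain ⟨e, he⟩ := h
  constructor
  · rintro ⟨hL, v, hinj, hadj⟩
    refine ⟨hL, ?_⟩
    have hLpos : 0 < L := by omega
    set w : ℕ → ℕ := fun a => v (a % L) with hw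
    have hweq : ∀ a, w (a + L) = w a := by
      intro a; simp only [hw, Nat.add_mod_right]
    have hwinj : ∀ a b, w a = w b → a % L = b % L := fun a b hab =>
      hinj _ (Nat.mod_lt _ hLpos) _ (Nat.mod_lt _ hLpos) hab
    have hwadj : ∀ a, R (w a) (w (a + 1)) = true := by
      intro a
      have h1 : (a % L + 1) % L = (a + 1) % L := by
        rw [Nat.add_mod a 1 L, Nat.mod_eq_of_lt (show 1 < L by omega)]
      have := hadj (a % L) (Nat.mod_lt _ hLpos)
      rw [h1] at this
      exact this
    set u : ℕ → (Σ k : ℕ, Fin (cycLen n k)) := fun a => e.symm (w a) with hu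
    have hwu : ∀ a, w a = e (u a) := fun a => (e.apply_symm_apply (w a)).symm
    have hcond : ∀ a, (u a).1 = (u (a+1)).1 ∧
        ((u (a+1)).2.val = ((u a).2.val + 1) % cycLen n (u a).1 ∨
         (u a).2.val = ((u (a+1)).2.val + 1) % cycLen n (u (a+1)).1) := by
      intro a
      have := (he (u a) (u (a+1))).mp (by rw [← hwu, ← hwu]; exact hwadj a)
      exact this
    have hkconst : ∀ a, (u a).1 = (u 0).1 := by
      intro a; induction a with
      | zero => rfl
      | succ b ih => rw [← (hcond b).1]; exact ih
    set K := (u 0).1 with hK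
    set m := cycLen n K with hm
    have hm3 : 3 ≤ m := cycLen_ge n K
    set q : ℕ → ℕ := fun a => ((u a).2 : ℕ) with hq
    have hqlt : ∀ a, q a < m := by
      intro a
      have h1 := (u a).2.isLt
      have h2 : cycLen n (u a).fst = m := congrArg (cycLen n) (hkconst a)
      show ((u a).2 : ℕ) < m
      omega
    have hedge : ∀ a, q (a+1) = (q a + 1) % m ∨ q a = (q (a+1) + 1) % m := by
      intro a
      have h2 := (hcond a).2
      have ha : cycLen n (u a).fst = m := congrArg (cycLen n) (hkconst a)
      have hb : cycLen n (u (a+1)).fst = m := congrArg (cycLen n) (hkconst (a+1))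
      rcases h2 with h | h
      · left
        show ((u (a+1)).2 : ℕ) = (((u a).2 : ℕ) + 1) % m
        rw [← ha]; exact h
      · right
        show ((u a).2 : ℕ) = (((u (a+1)).2 : ℕ) + 1) % m
        rw [← hb]; exact h
    have huq : ∀ a b, q a = q b → w a = w b := by
      intro a b hab
      have h1 : (u a).1 = (u b).1 := by rw [hkconst a, hkconst b]
      have : u a = u b := by
        refine Sigma.ext h1 ?_
        rw [Fin.heq_ext_iff (by rw [h1])]
        exact hab
      rw [hwu, hwu, this]
    have hsep : ∀ b, q b = q (b+2) → False := by
      intro b hb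
      have h1 : b % L = (b + 2) % L := hwinj _ _ (huq _ _ hb)
      have h2 : (L : ℤ) ∣ ((b : ℕ) + 2 : ℕ) - (b : ℤ) := Nat.ModEq.dvd h1
      have h3 : (L : ℤ) ∣ 2 := by
        have : (((b : ℕ) + 2 : ℕ) : ℤ) - (b : ℤ) = 2 := by push_cast; ring
        rwa [this] at h2
      have := Int.le_of_dvd (by norm_num) h3
      omega
    have hclos : ∀ a, ∃ c, q c = (q (a+1) + 1) % m := by
      intro a
      rcases hedge (a+1) with h1 | h1
      · exact ⟨a+2, h1⟩
      rcases hedge a with h2 | h2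
      · exfalso
        rw [h2] at h1
        have h3 : (q a + 1) % m = (q (a+2) + 1) % m := h1
        have h4 : q a % m = q (a+2) % m := Nat.ModEq.add_right_cancel' 1 h3
        rw [Nat.mod_eq_of_lt (hqlt a), Nat.mod_eq_of_lt (hqlt (a+2))] at h4
        exact hsep a h4
      · exact ⟨a, h2⟩
    have hclos' : ∀ a, ∃ c, q c = (q a + 1) % m := by
      intro a
      have h0 : q (a + L) = q a :=
        congrArg (fun z => ((e.symm z).2 : ℕ)) (hweq a)
      obtain ⟨c, hc⟩ := hclos (a + L - 1)
      refine ⟨c, ?_⟩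
      rw [hc]
      congr 1
      rw [show a + L - 1 + 1 = a + L by omega, h0]
    have hreach : ∀ c : ℕ, ∃ a, q a = (q 0 + c) % m := by
      intro c; induction c with
      | zero => exact ⟨0, by rw [Nat.add_zero, Nat.mod_eq_of_lt (hqlt 0)]⟩
      | succ d ih =>
        obtain ⟨a, ha⟩ := ih
        obtain ⟨c', hc'⟩ := hclos' a
        refine ⟨c', ?_⟩
        have hstep : ((q 0 + d) % m + 1) % m = (q 0 + (d + 1)) % m := by
          conv_rhs => rw [← Nat.add_assoc, Nat.add_mod (q 0 + d) 1 m,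
            Nat.mod_eq_of_lt (show 1 < m by omega)]
        rw [hc', ha, hstep]
    have hcover : ∀ x, x < m → ∃ a, q a = x := by
      intro x hx
      obtain ⟨a, ha⟩ := hreach (m - q 0 + x)
      refine ⟨a, ?_⟩
      rw [ha, show q 0 + (m - q 0 + x) = m + x by have := hqlt 0; omega,
        Nat.add_mod_left, Nat.mod_eq_of_lt hx]
    have hcard : L = m := by
      classical
      set T : Finset ℕ := (Finset.range L).image q with hT
      have hsub1 : Finset.range m ⊆ T := by
        intro x hxm
        obtain ⟨a, ha⟩ := hcover x (Finset.mem_range.mp hxm)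
        have h0 : q (a % L) = q a := by
          have hww : w (a % L) = w a := by
            show v (a % L % L) = v (a % L)
            rw [Nat.mod_eq_of_lt (Nat.mod_lt _ hLpos)]
          exact congrArg (fun z => ((e.symm z).2 : ℕ)) hww
        refine Finset.mem_image.mpr ⟨a % L, Finset.mem_range.mpr (Nat.mod_lt _ hLpos), ?_⟩
        rw [h0, ha]
      have hsub2 : T ⊆ Finset.range m := by
        intro x hx
        obtain ⟨a, _, ha⟩ := Finset.mem_image.mp hx
        rw [← ha]; exact Finset.mem_range.mpr (hqlt a)
      have hTeq : T = Finset.range m := Finset.Subset.antisymm hsub2 hsub1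
      have hinjq : Set.InjOn q (Finset.range L) := by
        intro a ha b hb hab
        simp only [Finset.coe_range, Set.mem_Iio] at ha hb
        have := hwinj a b (huq a b hab)
        rwa [Nat.mod_eq_of_lt ha, Nat.mod_eq_of_lt hb] at this
      have := Finset.card_image_of_injOn hinjq
      rw [← hT, hTeq, Finset.card_range, Finset.card_range] at this
      omega
    rw [hcard, hm]
    exact cycLen_ne n K
  · rintro ⟨hL, hne⟩
    obtain ⟨k, hk⟩ := cycLen_surj hn hL hne
    have hLpos : 0 < L := by omega
    refine ⟨hL, fun a => e ⟨k, ⟨a % L, by rw [hk]; exact Nat.mod_lt _ hLpos⟩⟩, ?_, ?_⟩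
    · intro a ha b hb hab
      have h1 := e.injective hab
      have h2 : a % L = b % L := by
        have := congrArg (fun z : (Σ k : ℕ, Fin (cycLen n k)) => (z.2 : ℕ)) h1
        simpa using this
      rwa [Nat.mod_eq_of_lt ha, Nat.mod_eq_of_lt hb] at h2
    · intro a ha
      rw [he]
      refine ⟨rfl, Or.inl ?_⟩
      show ((a + 1) % L) % L = (a % L + 1) % cycLen n k
      rw [hk, Nat.mod_eq_of_lt (Nat.mod_lt _ hLpos), Nat.mod_eq_of_lt ha]


def HasCycleIn (R : Struc) (L t : ℕ) : Prop :=
  ∃ v : ℕ → ℕ, (∀ a < L, ∀ b < L, v a = v b → a = b) ∧ (∀ a < L, v a ≤ t) ∧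
    ∀ a < L, R (v a) (v ((a + 1) % L)) = true

open Classical in
noncomputable def learner (R : Struc) (s : ℕ) : Option ℕ :=
  if HasCycleIn R ((Nat.unpair s).1 + 3) (Nat.unpair s).2 then some (Nat.unpair s).1
  else none

lemma hasCycleIn_congr {R R' : Struc} {s L t : ℕ} (h : restrEq R R' s) (ht : t ≤ s) :
    HasCycleIn R L t ↔ HasCycleIn R' L t := by
  have key : ∀ (S S' : Struc), restrEq S S' s → HasCycleIn S L t → HasCycleIn S' L t := by
    rintro S S' hSS ⟨v, hinj, hbd, hadj⟩
    refine ⟨v, hinj, hbd, fun a ha => ?_⟩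
    rw [← hSS (v a) (le_trans (hbd a ha) ht)
      (v ((a + 1) % L)) (le_trans (hbd _ (Nat.mod_lt _ (by omega))) ht)]
    exact hadj a ha
  constructor
  · exact key R R' h
  · exact key R' R (fun x hx y hy => (h x hx y hy).symm)

lemma learner_isLearner : IsLearner learner := by
  intro R R' s h
  unfold learner
  rw [hasCycleIn_congr h (Nat.unpair_right_le s)]

lemma learner_coLearns (A : ℕ → Struc) (hA : ∀ n, IsCyclesUnion (n + 3) (A n)) :
    CoLearns A learner := by
  intro R i hiso j
  constructor
  · rintro ⟨s, hs⟩
    unfold learner at hs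
    split at hs
    case isFalse => exact absurd hs (by simp)
    case isTrue h =>
      have hj : (Nat.unpair s).1 = j := by simpa using hs
      rw [hj] at h
      obtain ⟨v, hinj, hbd, hadj⟩ := h
      have hc : HasCycle (j + 3) R := ⟨by omega, v, hinj, hadj⟩
      have hc' : HasCycle (j + 3) (A i) := hasCycle_of_isom hiso hc
      have := ((hasCycle_iff (by omega) (hA i) (j + 3)).mp hc').2
      omega
  · intro hne
    have hc' : HasCycle (j + 3) (A i) :=
      (hasCycle_iff (by omega) (hA i) (j + 3)).mpr ⟨by omega, by omega⟩
    obtain ⟨-, v, hinj, hadj⟩ := hasCycle_of_isom (isom_symm hiso) hc'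
    set t := (Finset.range (j + 3)).sup v with hts
    refine ⟨Nat.pair j t, ?_⟩
    unfold learner
    rw [Nat.unpair_pair]
    split
    case isTrue => rfl
    case isFalse h =>
      exact absurd ⟨v, hinj, fun a ha => Finset.le_sup (Finset.mem_range.mpr ha), hadj⟩ h

def Pfun (ℓ : ℕ → ℕ) : ℕ → ℕ
  | 0 => 0
  | k + 1 => Pfun ℓ k + ℓ k

def blk (ℓ : ℕ → ℕ) (x : ℕ) : ℕ := Nat.findGreatest (fun b => Pfun ℓ b ≤ x) x

def bpos (ℓ : ℕ → ℕ) (x : ℕ) : ℕ := x - Pfun ℓ (blk ℓ x)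

def Cyc (ℓ : ℕ → ℕ) : Struc := fun x y =>
  decide (blk ℓ x = blk ℓ y ∧ (bpos ℓ y = (bpos ℓ x + 1) % ℓ (blk ℓ x) ∨
    bpos ℓ x = (bpos ℓ y + 1) % ℓ (blk ℓ y)))

section CycFacts

variable {ℓ : ℕ → ℕ} (hℓ : ∀ k, 3 ≤ ℓ k)

lemma Pfun_mono (ℓ : ℕ → ℕ) : Monotone (Pfun ℓ) := by
  apply monotone_nat_of_le_succ
  intro b
  show Pfun ℓ b ≤ Pfun ℓ b + ℓ b
  omega

include hℓ

lemma Pfun_lower : ∀ b, 3 * b ≤ Pfun ℓ b := by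
  intro b; induction b with
  | zero => simp [Pfun]
  | succ c ih => have := hℓ c; show 3 * (c + 1) ≤ Pfun ℓ c + ℓ c; omega

lemma blk_spec (x : ℕ) : Pfun ℓ (blk ℓ x) ≤ x :=
  Nat.findGreatest_spec (P := fun b => Pfun ℓ b ≤ x) (m := 0) (Nat.zero_le x)
    (Nat.zero_le x)

lemma blk_upper (x : ℕ) : x < Pfun ℓ (blk ℓ x + 1) := by
  by_contra hcon
  push_neg at hcon
  have h1 : blk ℓ x + 1 ≤ x := le_trans (by have := Pfun_lower hℓ (blk ℓ x + 1); omega) hcon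
  have h2 : blk ℓ x + 1 ≤ blk ℓ x :=
    Nat.le_findGreatest (P := fun b => Pfun ℓ b ≤ x) h1 hcon
  omega

lemma blk_eq {b a : ℕ} (ha : a < ℓ b) : blk ℓ (Pfun ℓ b + a) = b := by
  set x := Pfun ℓ b + a with hx
  have hble : b ≤ blk ℓ x := by
    apply Nat.le_findGreatest
    · have h0 := Pfun_lower hℓ b; omega
    · show Pfun ℓ b ≤ x; omega
  have hup : blk ℓ x ≤ b := by
    by_contra hcon
    push_neg at hcon
    have h1 : Pfun ℓ (b + 1) ≤ Pfun ℓ (blk ℓ x) := Pfun_mono ℓ hcon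
    have h2 : Pfun ℓ (blk ℓ x) ≤ x := blk_spec hℓ x
    have h3 : Pfun ℓ (b + 1) = Pfun ℓ b + ℓ b := rfl
    omega
  omega

lemma bpos_eq {b a : ℕ} (ha : a < ℓ b) : bpos ℓ (Pfun ℓ b + a) = a := by
  unfold bpos
  rw [blk_eq hℓ ha]
  omega

lemma bpos_lt (x : ℕ) : bpos ℓ x < ℓ (blk ℓ x) := by
  have h1 := blk_spec hℓ x
  have h2 := blk_upper hℓ x
  have h3 : Pfun ℓ (blk ℓ x + 1) = Pfun ℓ (blk ℓ x) + ℓ (blk ℓ x) := rfl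
  unfold bpos
  omega

lemma blk_decomp (x : ℕ) : Pfun ℓ (blk ℓ x) + bpos ℓ x = x := by
  have h1 := blk_spec hℓ x
  unfold bpos
  omega

end CycFacts

lemma cyc_restr {ℓ ℓ' : ℕ → ℕ} (hℓ : ∀ k, 3 ≤ ℓ k) (hℓ' : ∀ k, 3 ≤ ℓ' k) {N : ℕ}
    (hag : ∀ k < N, ℓ k = ℓ' k) :
    ∀ x < Pfun ℓ N, ∀ y < Pfun ℓ N, Cyc ℓ x y = Cyc ℓ' x y := by
  have hP : ∀ b ≤ N, Pfun ℓ b = Pfun ℓ' b := by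
    intro b hb
    induction b with
    | zero => rfl
    | succ c ih =>
      show Pfun ℓ c + ℓ c = Pfun ℓ' c + ℓ' c
      rw [ih (by omega), hag c (by omega)]
  have key : ∀ x < Pfun ℓ N, blk ℓ' x = blk ℓ x ∧ bpos ℓ' x = bpos ℓ x ∧ blk ℓ x < N := by
    intro x hx
    have hblt : blk ℓ x < N := by
      by_contra hcon
      push_neg at hcon
      have := Pfun_mono ℓ hcon
      have := blk_spec hℓ x
      omega
    have hd := blk_decomp hℓ x
    have hl := bpos_lt hℓ x
    have h1 : Pfun ℓ' (blk ℓ x) + bpos ℓ x = x := by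
      rw [← hP (blk ℓ x) (by omega)]; exact hd
    have h2 : bpos ℓ x < ℓ' (blk ℓ x) := by rw [← hag _ hblt]; exact hl
    have hb' : blk ℓ' x = blk ℓ x := by
      conv_lhs => rw [← h1]
      exact blk_eq hℓ' h2
    refine ⟨hb', ?_, hblt⟩
    conv_lhs => rw [← h1]
    rw [bpos_eq hℓ' h2]
  intro x hx y hy
  obtain ⟨hb1, hp1, hlt1⟩ := key x hx
  obtain ⟨hb2, hp2, hlt2⟩ := key y hy
  unfold Cyc
  rw [hb1, hb2, hp1, hp2, hag _ hlt1, hag _ hlt2]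

lemma isCyclesUnion_cyc {n : ℕ} {ℓ : ℕ → ℕ} (σ : ℕ ≃ ℕ)
    (hσ : ∀ k, ℓ (σ k) = cycLen n k) : IsCyclesUnion n (Cyc ℓ) := by
  have hℓ : ∀ b, 3 ≤ ℓ b := by
    intro b
    have := hσ (σ.symm b)
    rw [σ.apply_symm_apply] at this
    rw [this]
    exact cycLen_ge n _
  set f : (Σ k : ℕ, Fin (cycLen n k)) → ℕ := fun v => Pfun ℓ (σ v.1) + v.2.val with hf
  have hlt : ∀ v : (Σ k : ℕ, Fin (cycLen n k)), (v.2 : ℕ) < ℓ (σ v.1) := by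
    intro v; rw [hσ]; exact v.2.isLt
  have hblk : ∀ v, blk ℓ (f v) = σ v.1 := fun v => blk_eq hℓ (hlt v)
  have hbpos : ∀ v, bpos ℓ (f v) = (v.2 : ℕ) := fun v => bpos_eq hℓ (hlt v)
  have hbij : Function.Bijective f := by
    constructor
    · rintro ⟨k, a⟩ ⟨k', a'⟩ hvw
      have h1 : σ k = σ k' := by rw [← hblk ⟨k, a⟩, ← hblk ⟨k', a'⟩, hvw]
      have hk : k = k' := σ.injective h1
      subst hk
      have h2 : (a : ℕ) = (a' : ℕ) := by rw [← hbpos ⟨k, a⟩, ← hbpos ⟨k, a'⟩, hvw]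
      rw [Fin.ext h2]
    · intro x
      have ha : bpos ℓ x < cycLen n (σ.symm (blk ℓ x)) := by
        rw [← hσ (σ.symm (blk ℓ x)), σ.apply_symm_apply]
        exact bpos_lt hℓ x
      refine ⟨⟨σ.symm (blk ℓ x), ⟨bpos ℓ x, ha⟩⟩, ?_⟩
      show Pfun ℓ (σ (σ.symm (blk ℓ x))) + bpos ℓ x = x
      rw [σ.apply_symm_apply]
      exact blk_decomp hℓ x
  refine ⟨Equiv.ofBijective f hbij, ?_⟩
  intro v w
  show Cyc ℓ (f v) (f w) = true ↔ _
  unfold Cyc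
  rw [decide_eq_true_eq, hblk v, hblk w, hbpos v, hbpos w, hσ v.1, hσ w.1,
    Equiv.apply_eq_iff_eq]

lemma isom_of_isCyclesUnion {n : ℕ} {R R' : Struc} (h : IsCyclesUnion n R)
    (h' : IsCyclesUnion n R') : Isom R R' := by
  obtain ⟨e, he⟩ := h
  obtain ⟨e', he'⟩ := h'
  refine ⟨(e.symm).trans e', fun x y => ?_⟩
  have h1 := he' (e.symm x) (e.symm y)
  have h2 := he (e.symm x) (e.symm y)
  rw [e.apply_symm_apply, e.apply_symm_apply] at h2
  show R' (e' (e.symm x)) (e' (e.symm y)) = R x y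
  rw [Bool.eq_iff_iff]
  exact h1.trans h2.symm

def shiftPerm (N : ℕ) : ℕ ≃ ℕ where
  toFun k := if k = 0 then N else if k ≤ N then k - 1 else k
  invFun k := if k < N then k + 1 else if k = N then 0 else k
  left_inv k := by
    dsimp only
    by_cases h0 : k = 0
    · subst h0; simp
    · by_cases h1 : k ≤ N
      · have e1 : (if k = 0 then N else if k ≤ N then k - 1 else k) = k - 1 := by
          rw [if_neg h0, if_pos h1]
        rw [e1, if_pos (by omega)]; omega
      · have e1 : (if k = 0 then N else if k ≤ N then k - 1 else k) = k := by
          rw [if_neg h0, if_neg h1]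
        rw [e1, if_neg (by omega), if_neg (by omega)]
  right_inv k := by
    dsimp only
    by_cases h0 : k < N
    · have e1 : (if k < N then k + 1 else if k = N then 0 else k) = k + 1 := if_pos h0
      rw [e1, if_neg (by omega), if_pos (by omega)]; omega
    · by_cases h1 : k = N
      · subst h1
        have e1 : (if k < k then k + 1 else if k = k then 0 else k) = 0 := by
          rw [if_neg (by omega), if_pos rfl]
        rw [e1, if_pos rfl]
      · have e1 : (if k < N then k + 1 else if k = N then 0 else k) = k := by
          rw [if_neg h0, if_neg h1]
        rw [e1, if_neg (by omega), if_neg (by omega)]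

def shiftPerm2 (M : ℕ) : ℕ ≃ ℕ where
  toFun k := if k = 0 then 0 else if k = 1 then M + 1 else if k ≤ M + 1 then k - 1 else k
  invFun k := if k = 0 then 0 else if k < M + 1 then k + 1 else if k = M + 1 then 1 else k
  left_inv k := by
    dsimp only
    by_cases h0 : k = 0
    · subst h0; simp
    · by_cases h1 : k = 1
      · subst h1
        have e1 : (if 1 = 0 then 0 else if 1 = 1 then M + 1 else
            if 1 ≤ M + 1 then 1 - 1 else 1) = M + 1 := by
          rw [if_neg (by omega), if_pos rfl]
        rw [e1, if_neg (by omega), if_neg (by omega), if_pos rfl]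
      · by_cases h2 : k ≤ M + 1
        · have e1 : (if k = 0 then 0 else if k = 1 then M + 1 else
              if k ≤ M + 1 then k - 1 else k) = k - 1 := by
            rw [if_neg h0, if_neg h1, if_pos h2]
          rw [e1, if_neg (by omega), if_pos (by omega)]; omega
        · have e1 : (if k = 0 then 0 else if k = 1 then M + 1 else
              if k ≤ M + 1 then k - 1 else k) = k := by
            rw [if_neg h0, if_neg h1, if_neg h2]
          rw [e1, if_neg h0, if_neg (by omega), if_neg (by omega)]
  right_inv k := by
    dsimp only
    by_cases h0 : k = 0
    · subst h0; simp
    · by_cases h1 : k < M + 1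
      · have e1 : (if k = 0 then 0 else if k < M + 1 then k + 1 else
            if k = M + 1 then 1 else k) = k + 1 := by
          rw [if_neg h0, if_pos h1]
        rw [e1, if_neg (by omega), if_neg (by omega), if_pos (by omega)]; omega
      · by_cases h2 : k = M + 1
        · subst h2
          have e1 : (if M + 1 = 0 then 0 else if M + 1 < M + 1 then M + 1 + 1 else
              if M + 1 = M + 1 then 1 else M + 1) = 1 := by
            rw [if_neg (by omega), if_neg (by omega), if_pos rfl]
          rw [e1, if_neg (by omega), if_pos rfl]
        · have e1 : (if k = 0 then 0 else if k < M + 1 then k + 1 else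
              if k = M + 1 then 1 else k) = k := by
            rw [if_neg h0, if_neg h1, if_neg h2]
          rw [e1, if_neg h0, if_neg (by omega), if_neg (by omega)]

lemma sigmaR (N : ℕ) :
    ∀ k, (fun k => if k = N then 3 else k + 4) (shiftPerm N k) = cycLen (N + 4) k := by
  intro k
  simp only [shiftPerm, Equiv.coe_fn_mk, cycLen]
  split_ifs <;> omega

lemma sigmaR' (M : ℕ) :
    ∀ k, (fun k => if k = 0 then 3 else if k = M + 1 then 4 else k + 4)
      (shiftPerm2 M k) = cycLen (M + 5) k := by
  intro k
  simp only [shiftPerm2, Equiv.coe_fn_mk, cycLen]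
  split_ifs <;> first | (exfalso; assumption) | omega


/-- The family `{A_n : n ≥ 3}`, where `A_n` is the disjoint union of all cycles `C_m`
with `m ≥ 3`, `m ≠ n`, is co-learnable but not Id-learnable.
(Here `A k` stands for `A_{k+3}`.) -/
theorem cyclesFamily_co_not_id (A : ℕ → Struc)
    (hA : ∀ n, IsCyclesUnion (n + 3) (A n)) :
    (∃ M : Struc → ℕ → Option ℕ, IsLearner M ∧ CoLearns A M) ∧
    ¬ ∃ Γ : Struc → (ℕ → ℕ), ContinuousOn Γ (LD A) ∧
        ∀ R ∈ LD A, ∀ R' ∈ LD A, (Isom R R' ↔ Γ R = Γ R') := by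
  constructor
  · exact ⟨learner, learner_isLearner, learner_coLearns A hA⟩
  rintro ⟨Γ, hcont, hiff⟩
  have hS : IsCyclesUnion 3 (Cyc (cycLen 3)) :=
    isCyclesUnion_cyc (Equiv.refl ℕ) (fun k => rfl)
  have hS' : IsCyclesUnion 4 (Cyc (cycLen 4)) :=
    isCyclesUnion_cyc (Equiv.refl ℕ) (fun k => rfl)
  have hSA : Isom (Cyc (cycLen 3)) (A 0) := isom_of_isCyclesUnion hS (hA 0)
  have hS'A : Isom (Cyc (cycLen 4)) (A 1) := isom_of_isCyclesUnion hS' (hA 1)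
  have hSmem : Cyc (cycLen 3) ∈ LD A := ⟨0, hSA⟩
  have hS'mem : Cyc (cycLen 4) ∈ LD A := ⟨1, hS'A⟩
  have hRf : ∀ s : ℕ,
      IsCyclesUnion (s + 5) (Cyc (fun k => if k = s + 1 then 3 else k + 4)) :=
    fun s => isCyclesUnion_cyc (shiftPerm (s + 1)) (sigmaR (s + 1))
  have hRf' : ∀ s : ℕ,
      IsCyclesUnion (s + 5)
        (Cyc (fun k => if k = 0 then 3 else if k = s + 1 then 4 else k + 4)) :=
    fun s => isCyclesUnion_cyc (shiftPerm2 s) (sigmaR' s)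
  have hRfA : ∀ s, Isom (Cyc (fun k => if k = s + 1 then 3 else k + 4)) (A (s + 2)) :=
    fun s => isom_of_isCyclesUnion (hRf s) (hA (s + 2))
  have hRf'A : ∀ s,
      Isom (Cyc (fun k => if k = 0 then 3 else if k = s + 1 then 4 else k + 4))
        (A (s + 2)) :=
    fun s => isom_of_isCyclesUnion (hRf' s) (hA (s + 2))
  have hRmem : ∀ s, Cyc (fun k => if k = s + 1 then 3 else k + 4) ∈ LD A :=
    fun s => ⟨s + 2, hRfA s⟩
  have hR'mem : ∀ s,
      Cyc (fun k => if k = 0 then 3 else if k = s + 1 then 4 else k + 4) ∈ LD A :=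
    fun s => ⟨s + 2, hRf'A s⟩
  have hGam : ∀ s, Γ (Cyc (fun k => if k = s + 1 then 3 else k + 4)) =
      Γ (Cyc (fun k => if k = 0 then 3 else if k = s + 1 then 4 else k + 4)) :=
    fun s => (hiff _ (hRmem s) _ (hR'mem s)).mp
      (isom_trans (hRfA s) (isom_symm (hRf'A s)))
  have h0ge : ∀ k, 3 ≤ cycLen 3 k := cycLen_ge 3
  have h1ge : ∀ k, 3 ≤ cycLen 4 k := cycLen_ge 4
  have hRge : ∀ s k, 3 ≤ (fun k => if k = s + 1 then 3 else k + 4) k := by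
    intro s k; dsimp only; split <;> omega
  have hR'ge : ∀ s k,
      3 ≤ (fun k => if k = 0 then 3 else if k = s + 1 then 4 else k + 4) k := by
    intro s k; dsimp only; split_ifs <;> omega
  have hrestr : ∀ s : ℕ, ∀ x ≤ s, ∀ y ≤ s,
      Cyc (cycLen 3) x y = Cyc (fun k => if k = s + 1 then 3 else k + 4) x y := by
    intro s x hx y hy
    have hag : ∀ k < s + 1, cycLen 3 k = (fun k => if k = s + 1 then 3 else k + 4) k := by
      intro k hk
      show cycLen 3 k = if k = s + 1 then 3 else k + 4
      unfold cycLen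
      rw [if_neg (by omega), if_neg (by omega)]
    have hP := Pfun_lower h0ge (s + 1)
    exact cyc_restr h0ge (hRge s) hag x (by omega) y (by omega)
  have hrestr' : ∀ s : ℕ, ∀ x ≤ s, ∀ y ≤ s,
      Cyc (cycLen 4) x y =
        Cyc (fun k => if k = 0 then 3 else if k = s + 1 then 4 else k + 4) x y := by
    intro s x hx y hy
    have hag : ∀ k < s + 1, cycLen 4 k =
        (fun k => if k = 0 then 3 else if k = s + 1 then 4 else k + 4) k := by
      intro k hk
      show cycLen 4 k = if k = 0 then 3 else if k = s + 1 then 4 else k + 4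
      unfold cycLen
      by_cases h0 : k = 0
      · subst h0; rw [if_pos (by omega), if_pos rfl]
      · rw [if_neg (by omega), if_neg h0, if_neg (by omega)]
    have hP := Pfun_lower h1ge (s + 1)
    exact cyc_restr h1ge (hR'ge s) hag x (by omega) y (by omega)
  -- convergence
  have htend0 : Filter.Tendsto (fun s => Cyc (fun k => if k = s + 1 then 3 else k + 4))
      Filter.atTop (nhds (Cyc (cycLen 3))) := by
    rw [tendsto_pi_nhds]
    intro x
    rw [tendsto_pi_nhds]
    intro y
    apply Filter.Tendsto.congr' _ tendsto_const_nhds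
    filter_upwards [Filter.eventually_ge_atTop (max x y)] with s hs
    exact hrestr s x (le_trans (le_max_left x y) hs) y (le_trans (le_max_right x y) hs)
  have htend0' : Filter.Tendsto
      (fun s => Cyc (fun k => if k = 0 then 3 else if k = s + 1 then 4 else k + 4))
      Filter.atTop (nhds (Cyc (cycLen 4))) := by
    rw [tendsto_pi_nhds]
    intro x
    rw [tendsto_pi_nhds]
    intro y
    apply Filter.Tendsto.congr' _ tendsto_const_nhds
    filter_upwards [Filter.eventually_ge_atTop (max x y)] with s hs
    exact hrestr' s x (le_trans (le_max_left x y) hs) y (le_trans (le_max_right x y) hs)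
  have htend : Filter.Tendsto (fun s => Cyc (fun k => if k = s + 1 then 3 else k + 4))
      Filter.atTop (nhdsWithin (Cyc (cycLen 3)) (LD A)) :=
    tendsto_nhdsWithin_iff.mpr ⟨htend0, Filter.Eventually.of_forall hRmem⟩
  have htend' : Filter.Tendsto
      (fun s => Cyc (fun k => if k = 0 then 3 else if k = s + 1 then 4 else k + 4))
      Filter.atTop (nhdsWithin (Cyc (cycLen 4)) (LD A)) :=
    tendsto_nhdsWithin_iff.mpr ⟨htend0', Filter.Eventually.of_forall hR'mem⟩
  have hg1 : Filter.Tendsto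
      (fun s => Γ (Cyc (fun k => if k = s + 1 then 3 else k + 4)))
      Filter.atTop (nhds (Γ (Cyc (cycLen 3)))) :=
    Filter.Tendsto.comp (hcont _ hSmem) htend
  have hg2 : Filter.Tendsto
      (fun s => Γ (Cyc (fun k => if k = 0 then 3 else if k = s + 1 then 4 else k + 4)))
      Filter.atTop (nhds (Γ (Cyc (cycLen 4)))) :=
    Filter.Tendsto.comp (hcont _ hS'mem) htend'
  have hg1' : Filter.Tendsto
      (fun s => Γ (Cyc (fun k => if k = s + 1 then 3 else k + 4)))
      Filter.atTop (nhds (Γ (Cyc (cycLen 4)))) := by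
    apply Filter.Tendsto.congr' _ hg2
    exact Filter.Eventually.of_forall (fun s => (hGam s).symm)
  have hΓeq : Γ (Cyc (cycLen 3)) = Γ (Cyc (cycLen 4)) :=
    tendsto_nhds_unique hg1 hg1'
  have hSS' : Isom (Cyc (cycLen 3)) (Cyc (cycLen 4)) :=
    (hiff _ hSmem _ hS'mem).mpr hΓeq
  have hA01 : Isom (A 0) (A 1) :=
    isom_trans (isom_symm hSA) (isom_trans hSS' hS'A)
  have hc1 : HasCycle 3 (A 1) :=
    (hasCycle_iff (by omega) (hA 1) 3).mpr ⟨le_refl 3, by omega⟩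
  have hc0 : HasCycle 3 (A 0) := hasCycle_of_isom (isom_symm hA01) hc1
  have := ((hasCycle_iff (by omega) (hA 0) 3).mp hc0).2
  omega
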